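/- arXiv:2308.01376 — 3 statements merged into one kernel-verified Lean document; each statement's English description precedes it below -/
import Mathlib

section
/- For every integer N ≥ 5 and every integer k with 1 ≤ k ≤ N + 2, there do not exist transpositions t_1, …, t_k in the symmetric group S_N on {1, …, N} such that t_1 t_2 ⋯ t_k is the identity permutation and the subgroup of S_N generated by t_1, …, t_k acts transitively on {1, …, N}. -/
/-!
Let `σⱼ = t₁ ⋯ tⱼ` and `Hⱼ = ⟨t₁, …, tⱼ⟩`. Multiplying by a transposition changes the number
of cycles of `σⱼ` by at most one, and lowers it whenever the transposition joins two orbits of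
`Hⱼ`: such points lie in different cycles of `σⱼ ∈ Hⱼ`. The number of orbits falls from `N`
to `1`, so by induction `N + #cycles(σⱼ) ≤ j + 2 #orbits(Hⱼ)`. At `j = k`, where `σₖ = 1`,
this reads `2N ≤ k + 2`, which fails for `k ≤ N + 2` and `N ≥ 5`.
-/

open Equiv Equiv.Perm MulAction Subgroup

namespace Setoid

variable {α : Type*}

def merge (r : Setoid α) (x y : α) : Setoid α where
  r a b := r a b ∨ (r a x ∨ r a y) ∧ (r b x ∨ r b y)
  iseqv := by
    refine ⟨fun a => .inl (r.refl' a), ?_, ?_⟩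
    · rintro a b (h | ⟨ha, hb⟩)
      exacts [.inl (r.symm' h), .inr ⟨hb, ha⟩]
    · rintro a b c (hab | ⟨ha, hb⟩) (hbc | ⟨hb', hc⟩)
      · exact .inl (r.trans' hab hbc)
      · exact .inr ⟨hb'.imp (r.trans' hab) (r.trans' hab), hc⟩
      · exact .inr ⟨ha, hb.imp (r.trans' (r.symm' hbc)) (r.trans' (r.symm' hbc))⟩
      · exact .inr ⟨ha, hc⟩

variable (r : Setoid α) (x y : α)

lemma le_merge : r ≤ r.merge x y := fun _ _ => .inl

lemma merge_swap_apply [DecidableEq α] (z : α) : r.merge x y (swap x y z) z := by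
  rcases eq_or_ne z x with rfl | hzx
  · exact .inr ⟨.inr (by simp), .inl (r.refl' z)⟩
  rcases eq_or_ne z y with rfl | hzy
  · exact .inr ⟨.inl (by simp), .inr (r.refl' z)⟩
  · exact .inl (by simp [swap_apply_of_ne_of_ne hzx hzy])

variable {r x y}

lemma merge_eq_of_rel (h : r x y) : r.merge x y = r := by
  refine le_antisymm ?_ (r.le_merge x y)
  rintro a b (hab | ⟨ha, hb⟩)
  · exact hab
  · have hax := ha.elim id fun hay => r.trans' hay (r.symm' h)
    have hbx := hb.elim id fun hby => r.trans' hby (r.symm' h)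
    exact r.trans' hax (r.symm' hbx)

variable [Finite α] {s : Setoid α}

lemma card_quotient_le_of_le (h : r ≤ s) : Nat.card (Quotient s) ≤ Nat.card (Quotient r) :=
  Nat.card_le_card_of_surjective (map_of_le h) (Quotient.map_surjective _ Function.surjective_id)

lemma card_quotient_lt_of_le (h : r ≤ s) (hs : s x y) (hr : ¬ r x y) :
    Nat.card (Quotient s) < Nat.card (Quotient r) := by
  have := Fintype.ofFinite (Quotient r)
  have := Fintype.ofFinite (Quotient s)
  rw [Nat.card_eq_fintype_card, Nat.card_eq_fintype_card]
  refine Fintype.card_lt_of_surjective_not_injective (map_of_le h)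
    (Quotient.map_surjective _ Function.surjective_id) fun hinj => hr (Quotient.exact ?_)
  exact hinj (Quotient.sound hs)

/-- Away from the class of `y`, the quotient map to the merged setoid is injective. -/
lemma card_quotient_le_merge_add_one :
    Nat.card (Quotient r) ≤ Nat.card (Quotient (r.merge x y)) + 1 := by
  classical
  let f : Quotient r → Option (Quotient (r.merge x y)) := fun c =>
    if c = ⟦y⟧ then none else some (map_of_le (r.le_merge x y) c)
  have hf : Function.Injective f := by
    rintro ⟨a⟩ ⟨b⟩ hab
    simp only [f] at hab
    split_ifs at hab with ha hb hb
    · exact ha.trans hb.symm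
    · have hab' : r.merge x y a b := Quotient.exact (Option.some_injective _ hab)
      have hax : ∀ {c}, ¬ (⟦c⟧ : Quotient r) = ⟦y⟧ → (r c x ∨ r c y) → r c x :=
        fun hc h => h.resolve_right fun hcy => hc (Quotient.sound hcy)
      refine Quotient.sound (hab'.elim id fun ⟨hax', hbx'⟩ => ?_)
      exact r.trans' (hax ha hax') (r.symm' (hax hb hbx'))
  simpa using Nat.card_le_card_of_injective f hf

end Setoid

namespace Equiv.Perm

variable {α : Type*}

lemma orbitRel_closure_le {S : Set (Perm α)} {r : Setoid α} (h : ∀ g ∈ S, ∀ z, r (g z) z) :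
    orbitRel (closure S) α ≤ r := by
  have hclosure : ∀ g ∈ closure S, ∀ z, r (g z) z := fun g hg => by
    induction hg using closure_induction with
    | mem g hg => exact h g hg
    | one => exact r.refl'
    | mul g g' _ _ ihg ihg' => exact fun z => r.trans' (ihg (g' z)) (ihg' z)
    | inv g _ ihg => exact fun z => by simpa using r.symm' (ihg (g⁻¹ z))
  rintro _ z ⟨⟨g, hg⟩, rfl⟩
  exact hclosure g hg z

lemma sameCycle_setoid_le_orbitRel {σ : Perm α} {H : Subgroup (Perm α)} (hσ : σ ∈ H) :
    SameCycle.setoid σ ≤ orbitRel H α := by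
  rintro z _ ⟨i, rfl⟩
  exact (orbitRel H α).symm' ⟨⟨σ ^ i, zpow_mem hσ i⟩, rfl⟩

lemma sameCycle_setoid_le {σ : Perm α} {r : Setoid α} (h : ∀ z, r (σ z) z) :
    SameCycle.setoid σ ≤ r :=
  (sameCycle_setoid_le_orbitRel (mem_closure_singleton_self σ)).trans
    (orbitRel_closure_le (by simpa using h))

/-- The number of cycles of `σ`, fixed points included (unlike `σ.cycleType`). -/
noncomputable def numCycles (σ : Perm α) : ℕ := Nat.card (Quotient (SameCycle.setoid σ))

lemma numCycles_one : (1 : Perm α).numCycles = Nat.card α := by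
  have : SameCycle.setoid (1 : Perm α) = ⊥ := by ext; exact sameCycle_one
  rw [numCycles, this, Nat.card_congr Setoid.quotientBotEquiv]

variable [DecidableEq α] {σ : Perm α} {x y : α}

lemma sameCycle_setoid_mul_swap_le (σ : Perm α) (x y : α) :
    SameCycle.setoid (σ * swap x y) ≤ (SameCycle.setoid σ).merge x y :=
  sameCycle_setoid_le fun z =>
    ((SameCycle.setoid σ).merge x y).trans'
      ((SameCycle.setoid σ).le_merge x y (sameCycle_apply_left.2 (SameCycle.refl σ _)))
      ((SameCycle.setoid σ).merge_swap_apply x y z)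

/-- Were `x` and `y` in different cycles of `τ = σ * swap x y`, the cycle of `y` under `σ`
would contain a `τ`-invariant set containing `τ x = σ y`, hence also `x`. -/
lemma sameCycle_mul_swap [Finite α] (hxy : ¬ σ.SameCycle x y) :
    (σ * swap x y).SameCycle x y := by
  by_contra hτ
  set τ := σ * swap x y
  let s := {z | σ.SameCycle y z ∧ τ.SameCycle x z}
  have hmaps : Set.MapsTo τ s s := by
    rintro z ⟨hyz, hxz⟩
    have hzx : z ≠ x := by rintro rfl; exact hxy hyz.symm
    have hzy : z ≠ y := by rintro rfl; exact hτ hxz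
    have hτz : τ z = σ z := by simp [τ, swap_apply_of_ne_of_ne hzx hzy]
    exact ⟨hτz ▸ sameCycle_apply_right.2 hyz, sameCycle_apply_right.2 hxz⟩
  have hτx : τ x ∈ s := by
    refine ⟨?_, sameCycle_apply_right.2 (SameCycle.refl τ x)⟩
    simpa [τ] using sameCycle_apply_right.2 (SameCycle.refl σ y)
  obtain ⟨n, hn⟩ := (sameCycle_apply_left.2 (SameCycle.refl τ x)).exists_nat_pow_eq
  have hx := hmaps.iterate n hτx
  rw [← coe_pow, hn] at hx
  exact hxy hx.1.symm

lemma sameCycle_setoid_le_mul_swap [Finite α] (hxy : ¬ σ.SameCycle x y) :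
    SameCycle.setoid σ ≤ SameCycle.setoid (σ * swap x y) := by
  have h := sameCycle_setoid_mul_swap_le (σ * swap x y) x y
  rwa [mul_swap_mul_self, Setoid.merge_eq_of_rel (sameCycle_mul_swap hxy)] at h

lemma orbitRel_closure_insert_swap_le (S : Set (Perm α)) (x y : α) :
    orbitRel (closure (insert (swap x y) S)) α ≤ (orbitRel (closure S) α).merge x y := by
  refine orbitRel_closure_le ?_
  rintro g (rfl | hg) z
  · exact Setoid.merge_swap_apply _ x y z
  · exact Setoid.le_merge _ x y ⟨⟨g, subset_closure hg⟩, rfl⟩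

variable [Finite α]

lemma numCycles_mul_swap_le (σ : Perm α) (x y : α) :
    (σ * swap x y).numCycles ≤ σ.numCycles + 1 := by
  have h := sameCycle_setoid_mul_swap_le (σ * swap x y) x y
  rw [mul_swap_mul_self] at h
  exact Setoid.card_quotient_le_merge_add_one.trans
    (Nat.add_le_add_right (Setoid.card_quotient_le_of_le h) 1)

lemma numCycles_mul_swap_lt (hxy : ¬ σ.SameCycle x y) :
    (σ * swap x y).numCycles < σ.numCycles :=
  Setoid.card_quotient_lt_of_le (sameCycle_setoid_le_mul_swap hxy) (sameCycle_mul_swap hxy) hxy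

/-- The Riemann–Hurwitz inequality for a product of transpositions. -/
theorem card_add_numCycles_prod_le (l : List (Perm α)) (hl : ∀ g ∈ l, g.IsSwap) :
    Nat.card α + l.prod.numCycles ≤
      l.length + 2 * Nat.card (orbitRel.Quotient (closure {g | g ∈ l}) α) := by
  induction l using List.reverseRecOn with
  | nil =>
    have h : orbitRel (closure {g | g ∈ ([] : List (Perm α))}) α ≤ ⊥ :=
      orbitRel_closure_le (by simp)
    have := Setoid.card_quotient_le_of_le h
    rw [Nat.card_congr Setoid.quotientBotEquiv] at this
    rw [List.prod_nil, numCycles_one, List.length_nil]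
    unfold orbitRel.Quotient
    omega
  | append_singleton l t ih =>
    obtain ⟨x, y, -, rfl⟩ := hl t (by simp)
    have ih := ih fun g hg => hl g (by simp [hg])
    have hS : {g | g ∈ l ++ [swap x y]} = insert (swap x y) {g | g ∈ l} := by
      ext; simp [or_comm]
    have hσ : l.prod ∈ closure {g | g ∈ l} := list_prod_mem fun g hg => subset_closure hg
    have horbits :=
      Setoid.card_quotient_le_of_le (orbitRel_closure_insert_swap_le {g | g ∈ l} x y)
    rw [List.prod_append, List.prod_singleton, List.length_append, List.length_singleton, hS]
    unfold orbitRel.Quotient at *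
    by_cases hxy : orbitRel (closure {g | g ∈ l}) α x y
    · rw [Setoid.merge_eq_of_rel hxy] at horbits
      have := numCycles_mul_swap_le l.prod x y
      omega
    · have := numCycles_mul_swap_lt fun h => hxy (sameCycle_setoid_le_orbitRel hσ h)
      have := (orbitRel (closure {g | g ∈ l}) α).card_quotient_le_merge_add_one (x := x) (y := y)
      omega

end Equiv.Perm

theorem stmt1_general (N k : ℕ) (hN : 5 ≤ N) (hkN : k ≤ N + 2) :
    ¬ ∃ t : Fin k → Equiv.Perm (Fin N),
      (∀ j, (t j).IsSwap) ∧
      (List.ofFn t).prod = 1 ∧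
      (∀ i j : Fin N, ∃ h ∈ Subgroup.closure (Set.range t), h i = j) := by
  rintro ⟨t, hswap, hprod, htrans⟩
  have key := card_add_numCycles_prod_le (List.ofFn t) (by simpa [List.mem_ofFn] using hswap)
  have hrange : {g | g ∈ List.ofFn t} = Set.range t := by ext; simp
  have : IsPretransitive (closure (Set.range t)) (Fin N) :=
    ⟨fun i j => (htrans i j).elim fun h ⟨hh, hij⟩ => ⟨⟨h, hh⟩, hij⟩⟩
  have horbits : Nat.card (orbitRel.Quotient (closure (Set.range t)) (Fin N)) ≤ 1 :=
    Finite.card_le_one_iff_subsingleton.2 ((pretransitive_iff_subsingleton_quotient _ _).1 this)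
  rw [hprod, hrange, numCycles_one, List.length_ofFn, Nat.card_eq_fintype_card, Fintype.card_fin]
    at key
  omega

theorem stmt1 (N k : ℕ) (hN : 5 ≤ N) (hk : 1 ≤ k) (hkN : k ≤ N + 2) :
    ¬ ∃ t : Fin k → Equiv.Perm (Fin N),
      (∀ j, (t j).IsSwap) ∧
      (List.ofFn t).prod = 1 ∧
      (∀ i j : Fin N, ∃ h ∈ Subgroup.closure (Set.range t), h i = j) :=
  stmt1_general N k hN hkN
end

section
/- Let N ≥ 3 be an integer and let λ, γ ∈ ℂ be roots of unity with λ ≠ 1. If λ^{-1}(γ + N − 1) is an integer (that is, it lies in the image of ℤ in ℂ), then λ = −1 and either γ = 1 or γ = −1. -/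
/-!
Write `a = N - 1` and `z = λ⁻¹ (γ + a)`, so `γ = λ z - a`. Since `|γ| = |λ| = 1`, expanding
`|λ z - a|² = 1` gives `z² - 2 Re(λ) a z + a² = 1`; as `a ≥ 2` forces `z ≠ 0`, the number
`2 Re λ = λ + λ⁻¹` is rational. It is also an algebraic integer, hence an integer `m ∈ [-2, 2]`.
The discriminant of `z² - m a z + a² - 1` is `(m² - 4) a² + 4`, negative for `|m| ≤ 1`, and
`m = 2` means `λ = 1`. So `m = -2`, `λ = -1`, `(z + a)² = 1` and `γ = -(z + a) = ∓1`.
-/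

namespace Complex

theorem isIntegral_two_mul_re_of_pow_eq_one {ζ : ℂ} {n : ℕ} (hn : n ≠ 0) (h : ζ ^ n = 1) :
    IsIntegral ℤ ((2 * ζ.re : ℝ) : ℂ) := by
  have hζ : IsIntegral ℤ ζ := .of_pow (Nat.pos_of_ne_zero hn) (h ▸ isIntegral_one)
  have hconj : starRingEnd ℂ ζ = ζ ^ (n - 1) := by
    rw [← inv_eq_conj (norm_eq_one_of_pow_eq_one h hn), eq_comm, ← mul_eq_one_iff_eq_inv₀,
      ← pow_succ, Nat.sub_add_cancel (Nat.pos_of_ne_zero hn), h]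
    rintro rfl
    simp [hn] at h
  rw [← add_conj, hconj]
  exact hζ.add (hζ.pow _)

theorem exists_int_two_mul_re_of_pow_eq_one {ζ : ℂ} {n : ℕ} (hn : n ≠ 0) (h : ζ ^ n = 1)
    (hq : ∃ q : ℚ, 2 * ζ.re = q) : ∃ m : ℤ, (-2 ≤ m ∧ m ≤ 2) ∧ 2 * ζ.re = m := by
  obtain ⟨m, hm⟩ := (isIntegral_two_mul_re_of_pow_eq_one hn h).exists_int_iff_exists_rat.mp
    (hq.imp fun q hq => by rw [hq]; push_cast; rfl)
  have hm : 2 * ζ.re = m := by exact_mod_cast hm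
  have hre := abs_re_le_norm ζ
  rw [norm_eq_one_of_pow_eq_one h hn, abs_le] at hre
  refine ⟨m, ⟨?_, ?_⟩, hm⟩ <;> rify <;> linarith

theorem eq_ofReal_of_norm_eq_one_of_re_eq {ζ : ℂ} {r : ℝ} (hζ : ‖ζ‖ = 1) (hr : |r| = 1)
    (h : ζ.re = r) : ζ = r :=
  ext h (by simpa using abs_re_eq_norm.mp (h ▸ hr.trans hζ.symm))

theorem normSq_mul_ofReal_sub_ofReal {ζ : ℂ} (hζ : ‖ζ‖ = 1) (z a : ℝ) :
    normSq (ζ * z - a) = z ^ 2 - 2 * ζ.re * a * z + a ^ 2 := by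
  have h1 : normSq ζ = 1 := by rw [normSq_eq_norm_sq, hζ, one_pow]
  simp only [normSq_apply, sub_re, mul_re, ofReal_re, ofReal_im, sub_im, mul_im] at h1 ⊢
  linear_combination z ^ 2 * h1

end Complex

theorem Int.eq_two_or_eq_neg_two_of_sq_sub_mul_add_sq_eq_one {a m z : ℤ} (ha : 2 ≤ a)
    (hm : -2 ≤ m ∧ m ≤ 2) (h : z ^ 2 - m * a * z + a ^ 2 = 1) : m = 2 ∨ m = -2 := by
  by_contra hne
  have hm2 : m ^ 2 ≤ 1 := by nlinarith [show -1 ≤ m ∧ m ≤ 1 by omega]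
  nlinarith [sq_nonneg (2 * z - m * a), mul_nonneg (sub_nonneg.mpr hm2) (sq_nonneg a)]

open Complex

theorem stmt5 (N : ℕ) (hN : 3 ≤ N) (lam gam : ℂ)
    (hlam : ∃ n : ℕ, 0 < n ∧ lam ^ n = 1)
    (hgam : ∃ n : ℕ, 0 < n ∧ gam ^ n = 1)
    (hlam1 : lam ≠ 1)
    (hint : ∃ z : ℤ, lam⁻¹ * (gam + (N : ℂ) - 1) = (z : ℂ)) :
    lam = -1 ∧ (gam = 1 ∨ gam = -1) := by
  obtain ⟨n, hn, hlamn⟩ := hlam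
  obtain ⟨k, hk, hgamk⟩ := hgam
  obtain ⟨z, hz⟩ := hint
  have hlam_norm := norm_eq_one_of_pow_eq_one hlamn hn.ne'
  set a : ℤ := N - 1 with ha_def
  have ha : 2 ≤ a := by omega
  have hgam_eq : gam = lam * (z : ℝ) - (a : ℝ) := by
    have hlam0 : lam ≠ 0 := by rintro rfl; norm_num at hlam_norm
    rw [inv_mul_eq_iff_eq_mul₀ hlam0] at hz
    push_cast [ha_def]
    linear_combination hz
  have hcircle : (z : ℝ) ^ 2 - 2 * lam.re * a * z + a ^ 2 = 1 := by
    rw [← normSq_mul_ofReal_sub_ofReal hlam_norm, ← hgam_eq, normSq_eq_norm_sq,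
      norm_eq_one_of_pow_eq_one hgamk hk.ne', one_pow]
  have hz0 : z ≠ 0 := by
    rintro rfl
    have : a ^ 2 = 1 := by exact_mod_cast (by simpa using hcircle : (a : ℝ) ^ 2 = 1)
    nlinarith
  obtain ⟨m, hm, hre⟩ := exists_int_two_mul_re_of_pow_eq_one hn.ne' hlamn
    ⟨(z ^ 2 + a ^ 2 - 1) / (a * z), by
      have : (a : ℝ) ≠ 0 := by positivity
      push_cast; field_simp; linear_combination -hcircle⟩
  have hquad : z ^ 2 - m * a * z + a ^ 2 = 1 := by
    rw [hre] at hcircle; exact_mod_cast hcircle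
  obtain rfl | rfl := Int.eq_two_or_eq_neg_two_of_sq_sub_mul_add_sq_eq_one ha hm hquad
  · refine absurd ?_ hlam1
    simpa using eq_ofReal_of_norm_eq_one_of_re_eq hlam_norm (r := 1) (by norm_num)
      (by push_cast at hre; linarith)
  · have hlam_eq : lam = -1 := by
      simpa using eq_ofReal_of_norm_eq_one_of_re_eq hlam_norm (r := -1) (by norm_num)
        (by push_cast at hre; linarith)
    refine ⟨hlam_eq, ?_⟩
    have hgam_neg : gam = -((z + a : ℤ) : ℂ) := by rw [hgam_eq, hlam_eq]; push_cast; ring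
    have hsq : (z + a) * (z + a) = 1 := by linear_combination hquad
    rcases Int.eq_one_or_neg_one_of_mul_eq_one hsq with h | h <;> simp [hgam_neg, h]
end

section
/- Let s₁, s₂, s₃, s₄, s₅, s₆ be the 4×4 complex matrices with rows, respectively: s₁ = ((0,−1,0,0),(−1,0,0,0),(0,0,1,0),(0,0,0,1)); s₂ = ((0,1,0,0),(1,0,0,0),(0,0,1,0),(0,0,0,1)); s₃ = ((1,0,0,0),(0,1,0,0),(0,0,0,−1),(0,0,−1,0)); s₄ = ((1,0,0,0),(0,1,0,0),(0,0,0,1),(0,0,1,0)); s₅ = ((0,0,−1,0),(0,1,0,0),(−1,0,0,0),(0,0,0,1)); s₆ = ((0,0,1,0),(0,−1,0,0),(1,0,0,0),(0,0,0,−1)). Then: (i) each sᵢ lies in the group G(2,2,4) ⊆ GL₄(ℂ); (ii) s₁s₂s₃s₄s₅s₆ = Id; (iii) s₁, s₂, s₃, s₄, s₅ are pseudoreflections and −s₆ is a pseudoreflection; and (iv) s₁, …, s₆ generate G(2,2,4). -/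
/-!
Write `monomialMatrix σ f` for the monomial matrix with entry `f j` at `(σ j, j)`; it factors as
`permMatrixHom σ * diagonal f`, and `G(2,2,4)` consists of those with `f j = ±1` and `∏ f = 1`.
These form a monoid containing the `sᵢ`, and since each `sᵢ` is an involution, the group generated
by the `sᵢ` is the monoid they generate. Conversely, `s₁s₂`, `s₅s₁s₂s₅` and `s₃s₄` change the signs
of the coordinate pairs `{1,2}`, `{2,3}`, `{3,4}`, which generate all even sign changes, while
`s₂`, `s₄` and `s₅ · s₁s₂ · s₅s₁s₂s₅` are the permutation matrices of the transpositions
`(1 2)`, `(3 4)`, `(1 3)`, which generate `S₄`. Finally `s₁, …, s₅` and `-s₆ = s₅` are of the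
form `1 - α αᵀ` with `α ≠ 0`. (In `s10 0, …, s10 5` and in `Fin 4`, indices start at `0`.)
-/

open scoped MatrixGroups

/-- An element of `GL_r(ℂ)` (here, viewed as a matrix) is a pseudoreflection
if `g - Id` has rank 1. -/
def IsPseudoreflection {r : ℕ} (g : Matrix (Fin r) (Fin r) ℂ) : Prop :=
  (g - 1).rank = 1

/-- The complex reflection group `G(m,p,N)`: monomial `N × N` matrices whose
nonzero entries are `m`-th roots of unity, and such that the product of the
nonzero entries is an `(m/p)`-th root of unity. -/
def GmpN (m p N : ℕ) : Set (Matrix (Fin N) (Fin N) ℂ) :=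
  {g | ∃ (σ : Equiv.Perm (Fin N)) (f : Fin N → ℂ),
    (∀ j, f j ^ m = 1) ∧ (∏ j, f j) ^ (m / p) = 1 ∧
    ∀ i j, g i j = if i = σ j then f j else 0}

/-- The six explicit elements of `G(2,2,4) = W(D₄)`. -/
def s10 : Fin 6 → Matrix (Fin 4) (Fin 4) ℂ :=
  ![!![0,-1,0,0; -1,0,0,0; 0,0,1,0; 0,0,0,1],
    !![0,1,0,0; 1,0,0,0; 0,0,1,0; 0,0,0,1],
    !![1,0,0,0; 0,1,0,0; 0,0,0,-1; 0,0,-1,0],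
    !![1,0,0,0; 0,1,0,0; 0,0,0,1; 0,0,1,0],
    !![0,0,-1,0; 0,1,0,0; -1,0,0,0; 0,0,0,1],
    !![0,0,1,0; 0,-1,0,0; 1,0,0,0; 0,0,0,-1]]

open Matrix Equiv

theorem Matrix.rank_vecMulVec_eq_one {K n : Type*} [Field K] [Fintype n] [DecidableEq n]
    {u v : n → K} (hu : u ≠ 0) (hv : v ≠ 0) : (vecMulVec u v).rank = 1 := by
  refine le_antisymm (rank_vecMulVec_le u v) (Nat.one_le_iff_ne_zero.2 fun h => ?_)
  rw [Matrix.rank, Submodule.finrank_eq_zero, LinearMap.range_eq_bot, ← toLin'_apply',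
    LinearEquiv.map_eq_zero_iff, vecMulVec_eq_zero] at h
  exact h.elim hu hv

theorem isPseudoreflection_one_sub_vecMulVec {r : ℕ} {u v : Fin r → ℂ} (hu : u ≠ 0)
    (hv : v ≠ 0) : IsPseudoreflection (1 - vecMulVec u v) := by
  rw [IsPseudoreflection, sub_sub_cancel_left, ← neg_vecMulVec]
  exact rank_vecMulVec_eq_one (neg_ne_zero.2 hu) hv

theorem Subgroup.mem_closure_iff_map_mem_mclosure {G M : Type*} [Group G] [Monoid M]
    {φ : G →* M} (hφ : Function.Injective φ) {s : Set G} (hs : s⁻¹ = s) {g : G} :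
    g ∈ Subgroup.closure s ↔ φ g ∈ Submonoid.closure (φ '' s) := by
  rw [← Subgroup.mem_toSubmonoid, Subgroup.closure_toSubmonoid, hs, Set.union_self,
    ← Submonoid.mem_map_iff_mem hφ, MonoidHom.map_mclosure]

section MonomialMatrix

variable {ι R : Type*} [DecidableEq ι]

def monomialMatrix [Zero R] (σ : Perm ι) (f : ι → R) : Matrix ι ι R :=
  of fun i j => if i = σ j then f j else 0

theorem monomialMatrix_one_one [Zero R] [One R] :
    monomialMatrix (1 : Perm ι) (1 : ι → R) = 1 := by
  ext i j
  rw [one_apply]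
  rfl

theorem monomialMatrix_one_left [Zero R] (f : ι → R) : monomialMatrix 1 f = diagonal f := by
  ext i j
  by_cases h : i = j <;> simp [monomialMatrix, h]

variable [Fintype ι] [NonAssocSemiring R]

theorem monomialMatrix_mul (σ τ : Perm ι) (f g : ι → R) :
    monomialMatrix σ f * monomialMatrix τ g =
      monomialMatrix (σ * τ) (fun j => f (τ j) * g j) := by
  ext i j
  rw [mul_apply, Finset.sum_eq_single (τ j)]
  · by_cases h : i = σ (τ j) <;> simp [monomialMatrix, h]
  · intro k _ hk
    simp [monomialMatrix, hk]
  · simp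

theorem permMatrixHom_eq_monomialMatrix (σ : Perm ι) :
    (permMatrixHom : Perm ι →* Matrix ι ι R) σ = monomialMatrix σ 1 := by
  ext i j
  simp [monomialMatrix, PEquiv.toMatrix_apply, eq_comm, Equiv.eq_symm_apply]

theorem monomialMatrix_eq_permMatrixHom_mul_diagonal (σ : Perm ι) (f : ι → R) :
    monomialMatrix σ f = permMatrixHom σ * diagonal f := by
  rw [permMatrixHom_eq_monomialMatrix, ← monomialMatrix_one_left, monomialMatrix_mul]
  simp

end MonomialMatrix

theorem mem_GmpN_iff {m p N : ℕ} {g : Matrix (Fin N) (Fin N) ℂ} :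
    g ∈ GmpN m p N ↔ ∃ (σ : Perm (Fin N)) (f : Fin N → ℂ),
      (∀ j, f j ^ m = 1) ∧ (∏ j, f j) ^ (m / p) = 1 ∧ g = monomialMatrix σ f := by
  simp only [GmpN, Set.mem_ofPred_eq, ← Matrix.ext_iff, monomialMatrix, of_apply]

def GmpN.submonoid (m p N : ℕ) : Submonoid (Matrix (Fin N) (Fin N) ℂ) where
  carrier := GmpN m p N
  one_mem' := mem_GmpN_iff.2 ⟨1, 1, by simp, by simp, monomialMatrix_one_one.symm⟩
  mul_mem' := by
    intro a b ha hb
    obtain ⟨σ, f, hf, hpf, rfl⟩ := mem_GmpN_iff.1 ha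
    obtain ⟨τ, g, hg, hpg, rfl⟩ := mem_GmpN_iff.1 hb
    refine mem_GmpN_iff.2 ⟨σ * τ, fun j => f (τ j) * g j, fun j => ?_, ?_, monomialMatrix_mul ..⟩
    · rw [mul_pow, hf, hg, one_mul]
    · rw [Finset.prod_mul_distrib, Equiv.prod_comp, mul_pow, hpf, hpg, one_mul]

def s10Perm : Fin 6 → Perm (Fin 4) :=
  ![swap 0 1, swap 0 1, swap 2 3, swap 2 3, swap 0 2, swap 0 2]

def s10Sign : Fin 6 → Fin 4 → ℂ :=
  ![![-1, -1, 1, 1], 1, ![1, 1, -1, -1], 1, ![-1, 1, -1, 1], ![1, -1, 1, -1]]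

theorem s10_eq_monomialMatrix (i : Fin 6) :
    s10 i = monomialMatrix (s10Perm i) (s10Sign i) := by
  fin_cases i <;> ext a b <;> fin_cases a <;> fin_cases b <;> rfl

theorem s10_mem_GmpN (i : Fin 6) : s10 i ∈ GmpN 2 2 4 := by
  refine mem_GmpN_iff.2 ⟨s10Perm i, s10Sign i, ?_, ?_, s10_eq_monomialMatrix i⟩ <;>
    fin_cases i <;> simp [s10Sign, Fin.forall_fin_succ, Fin.prod_univ_four]

theorem s10_mul_self (i : Fin 6) : s10 i * s10 i = 1 := by
  rw [s10_eq_monomialMatrix, monomialMatrix_mul, ← monomialMatrix_one_one]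
  fin_cases i <;> congr 1 <;>
    first | decide | (funext j; fin_cases j <;> simp [s10Perm, s10Sign, swap_apply_def])

theorem s10_prod_eq_one : s10 0 * s10 1 * s10 2 * s10 3 * s10 4 * s10 5 = 1 := by
  simp only [s10_eq_monomialMatrix, monomialMatrix_mul, ← monomialMatrix_one_one]
  congr 1
  · decide
  · funext j
    fin_cases j <;> simp [s10Perm, s10Sign, swap_apply_def]

def s10Root : Fin 5 → Fin 4 → ℂ :=
  ![![1, 1, 0, 0], ![1, -1, 0, 0], ![0, 0, 1, 1], ![0, 0, 1, -1], ![1, 0, 1, 0]]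

theorem s10Root_ne_zero (k : Fin 5) : s10Root k ≠ 0 := by
  fin_cases k <;> simp [s10Root, funext_iff, Fin.exists_fin_succ]

theorem s10_castSucc_eq_one_sub_vecMulVec (k : Fin 5) :
    s10 k.castSucc = 1 - vecMulVec (s10Root k) (s10Root k) := by
  fin_cases k <;> ext a b <;> fin_cases a <;> fin_cases b <;> simp [s10, s10Root, one_apply]

theorem neg_s10_five : -s10 5 = s10 4 := by
  ext a b
  fin_cases a <;> fin_cases b <;> simp [s10]

def pairSign (k : Fin 3) (x : ℂ) : Fin 4 → ℂ :=
  fun j => if j = k.castSucc ∨ j = k.succ then x else 1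

theorem diagonal_eq_pairSign_mul {f : Fin 4 → ℂ} (hf : ∀ j, f j ^ 2 = 1) (hp : ∏ j, f j = 1) :
    diagonal f = diagonal (pairSign 0 (f 0)) * diagonal (pairSign 1 (f 0 * f 1)) *
      diagonal (pairSign 2 (f 0 * f 1 * f 2)) := by
  rw [diagonal_mul_diagonal, diagonal_mul_diagonal, Fin.prod_univ_four] at *
  congr 1
  funext j
  fin_cases j <;> simp [pairSign]
  · linear_combination (-f 1) * hf 0
  · linear_combination (-f 2 * f 1 ^ 2) * hf 0 - f 2 * hf 1
  · linear_combination (-f 3 * f 1 ^ 2 * f 2 ^ 2) * hf 0 - f 3 * f 2 ^ 2 * hf 1 - f 3 * hf 2 +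
      f 0 * f 1 * f 2 * hp

local notation "W" => Submonoid.closure (Set.range s10)

theorem s10_mem_mclosure (i : Fin 6) : s10 i ∈ W := Submonoid.subset_closure ⟨i, rfl⟩

theorem diagonal_pairSign_neg_one_mem_mclosure (k : Fin 3) :
    diagonal (pairSign k (-1)) ∈ W := by
  obtain ⟨h01, h12, h23⟩ : s10 0 * s10 1 = diagonal (pairSign 0 (-1)) ∧
      s10 4 * s10 0 * s10 1 * s10 4 = diagonal (pairSign 1 (-1)) ∧
      s10 2 * s10 3 = diagonal (pairSign 2 (-1)) := by
    refine ⟨?_, ?_, ?_⟩ <;>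
      simp only [← monomialMatrix_one_left, s10_eq_monomialMatrix, monomialMatrix_mul] <;>
      congr 1 <;>
      first | decide | (funext j; fin_cases j <;> simp [s10Perm, s10Sign, pairSign, swap_apply_def])
  match k with
  | 0 => exact h01 ▸ mul_mem (s10_mem_mclosure 0) (s10_mem_mclosure 1)
  | 1 => exact h12 ▸ mul_mem (mul_mem (mul_mem (s10_mem_mclosure 4) (s10_mem_mclosure 0))
      (s10_mem_mclosure 1)) (s10_mem_mclosure 4)
  | 2 => exact h23 ▸ mul_mem (s10_mem_mclosure 2) (s10_mem_mclosure 3)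

theorem diagonal_pairSign_mem_mclosure (k : Fin 3) {x : ℂ} (hx : x ^ 2 = 1) :
    diagonal (pairSign k x) ∈ W := by
  rcases sq_eq_one_iff.1 hx with rfl | rfl
  · have : pairSign k 1 = 1 := by funext j; simp [pairSign]
    rw [this, diagonal_one']
    exact one_mem _
  · exact diagonal_pairSign_neg_one_mem_mclosure k

theorem diagonal_mem_mclosure {f : Fin 4 → ℂ} (hf : ∀ j, f j ^ 2 = 1) (hp : ∏ j, f j = 1) :
    diagonal f ∈ W := by
  rw [diagonal_eq_pairSign_mul hf hp]
  refine mul_mem (mul_mem ?_ ?_) ?_ <;> apply diagonal_pairSign_mem_mclosure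
  · exact hf 0
  · rw [mul_pow, hf, hf, one_mul]
  · rw [mul_pow, mul_pow, hf, hf, hf, one_mul, one_mul]

theorem permMatrixHom_mem_mclosure (σ : Perm (Fin 4)) : permMatrixHom σ ∈ W := by
  have h01 : permMatrixHom (swap (0 : Fin 4) 1) ∈ W :=
    (permMatrixHom_eq_monomialMatrix _).trans (s10_eq_monomialMatrix 1).symm ▸ s10_mem_mclosure 1
  have h23 : permMatrixHom (swap (2 : Fin 4) 3) ∈ W :=
    (permMatrixHom_eq_monomialMatrix _).trans (s10_eq_monomialMatrix 3).symm ▸ s10_mem_mclosure 3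
  have h02 : permMatrixHom (swap (0 : Fin 4) 2) ∈ W := by
    have : permMatrixHom (swap (0 : Fin 4) 2) =
        s10 4 * diagonal (pairSign 0 (-1)) * diagonal (pairSign 1 (-1)) := by
      rw [permMatrixHom_eq_monomialMatrix, s10_eq_monomialMatrix, ← monomialMatrix_one_left,
        ← monomialMatrix_one_left, monomialMatrix_mul, monomialMatrix_mul]
      congr 1
      funext j
      fin_cases j <;> simp [s10Sign, pairSign]
    rw [this]
    exact mul_mem
      (mul_mem (s10_mem_mclosure 4) (diagonal_pairSign_neg_one_mem_mclosure 0))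
      (diagonal_pairSign_neg_one_mem_mclosure 1)
  have h12 : permMatrixHom (swap (1 : Fin 4) 2) ∈ W := by
    rw [show swap (1 : Fin 4) 2 = swap 0 1 * swap 0 2 * swap 0 1 by decide, map_mul, map_mul]
    exact mul_mem (mul_mem h01 h02) h01
  have htop : Submonoid.comap permMatrixHom W = ⊤ := by
    rw [eq_top_iff, ← Perm.mclosure_swap_castSucc_succ 3, Submonoid.closure_le,
      Set.range_subset_iff]
    intro k
    match k with
    | 0 => exact h01
    | 1 => exact h12
    | 2 => exact h23
  exact Submonoid.mem_comap.1 (htop ▸ Submonoid.mem_top σ)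

theorem mclosure_range_s10 : Submonoid.closure (Set.range s10) = GmpN.submonoid 2 2 4 := by
  refine le_antisymm (Submonoid.closure_le.2 (Set.range_subset_iff.2 s10_mem_GmpN))
    fun g hg => ?_
  obtain ⟨σ, f, hf, hp, rfl⟩ := mem_GmpN_iff.1 hg
  rw [monomialMatrix_eq_permMatrixHom_mul_diagonal]
  exact mul_mem (permMatrixHom_mem_mclosure σ) (diagonal_mem_mclosure hf (by simpa using hp))

def s10Unit (i : Fin 6) : GL (Fin 4) ℂ := ⟨s10 i, s10 i, s10_mul_self i, s10_mul_self i⟩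

theorem inv_range_s10Unit : (Set.range s10Unit)⁻¹ = Set.range s10Unit := by
  rw [Set.inv_range]
  rfl

theorem stmt10 :
    (∀ i, s10 i ∈ GmpN 2 2 4) ∧
    s10 0 * s10 1 * s10 2 * s10 3 * s10 4 * s10 5 = 1 ∧
    (∀ i : Fin 6, (i : ℕ) < 5 → IsPseudoreflection (s10 i)) ∧
    IsPseudoreflection (-(s10 5)) ∧
    (∃ S : Fin 6 → GL (Fin 4) ℂ,
      (∀ i, (S i : Matrix (Fin 4) (Fin 4) ℂ) = s10 i) ∧
      ∀ g : GL (Fin 4) ℂ, g ∈ Subgroup.closure (Set.range S) ↔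
        (g : Matrix (Fin 4) (Fin 4) ℂ) ∈ GmpN 2 2 4) := by
  have reflection (k : Fin 5) : IsPseudoreflection (s10 k.castSucc) := by
    rw [s10_castSucc_eq_one_sub_vecMulVec]
    exact isPseudoreflection_one_sub_vecMulVec (s10Root_ne_zero k) (s10Root_ne_zero k)
  refine ⟨s10_mem_GmpN, s10_prod_eq_one, fun i hi => reflection ⟨i, hi⟩,
    neg_s10_five ▸ reflection 4, s10Unit, fun i => rfl, fun g => ?_⟩
  rw [Subgroup.mem_closure_iff_map_mem_mclosure (φ := Units.coeHom _) Units.val_injective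
    inv_range_s10Unit, ← Set.range_comp]
  exact SetLike.ext_iff.1 mclosure_range_s10 (g : Matrix (Fin 4) (Fin 4) ℂ)
end
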